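/- Every play of the semantic game for the truth-teller formula C₀ C₀ is infinite; consequently, for every model 𝔐 and assignment g, neither 𝔐,g ⊨⁺ C₀ C₀ nor 𝔐,g ⊨⁻ C₀ C₀, i.e., neither Eloise nor Abelard has a winning strategy in the game G(𝔐, g, C₀ C₀). The same holds for the liar-type formula C₀ ¬C₀: every play of its semantic game is infinite, so neither player has a winning strategy. -/
import Mathlib


/-!
Computation logic 𝓛: first-order logic over a relational vocabulary extended with
point/tuple insertion and deletion operators and self-referential naming constructs,
with game-theoretic semantics.

STATEMENT 0: For every Turing machine TM there exists a formula φ ∈ 𝓛 such that for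
every finite model 𝔐: TM accepts enc(𝔐) iff 𝔐 ⊨⁺ φ, and TM rejects enc(𝔐) iff 𝔐 ⊨⁻ φ.
-/

namespace CompLogic

/-- Relation symbols are natural numbers; `arity` gives the arity of each symbol.
Symbols `< k` form the actual finite vocabulary, symbols `≥ k` are the extra
"tape" relation symbols, interpreted initially as the empty relation. -/
structure Model (arity : ℕ → ℕ) where
  dom : Finset ℕ
  rel : ℕ → Set (List ℕ)

/-- Partial variable assignments (variables are natural numbers). -/
abbrev Assign := ℕ → Option ℕ

/-- The empty assignment. -/
def Assign.empty : Assign := fun _ => none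

/-- `g[x ↦ a]`. -/
def Assign.update (g : Assign) (x a : ℕ) : Assign :=
  fun y => if y = x then some a else g y

/-- `g[x₁ ↦ a₁, …, xₙ ↦ aₙ]`. -/
def Assign.updates (g : Assign) : List ℕ → List ℕ → Assign
  | x :: xs, a :: as => ((g.update x a).updates xs as)
  | _, _ => g

/-- Remove from `g` all pairs `(y, u)` with value the deleted point `u`. -/
def Assign.delVal (g : Assign) (u : ℕ) : Assign :=
  fun y => if g y = some u then none else g y

variable {arity : ℕ → ℕ}

/-- A canonical fresh point not in the domain of `M`. -/
def Model.fresh (M : Model arity) : ℕ := (M.dom.sup id) + 1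

/-- Insert a fresh isolated point `u` into the domain. -/
def Model.addPt (M : Model arity) (u : ℕ) : Model arity :=
  { dom := insert u M.dom, rel := M.rel }

/-- Delete the point `u` from the domain, together with all tuples containing it. -/
def Model.deletePt (M : Model arity) (u : ℕ) : Model arity :=
  { dom := M.dom.erase u, rel := fun R => { t | t ∈ M.rel R ∧ u ∉ t } }

/-- Insert the tuple `t` into the relation `R`. -/
def Model.addTuple (M : Model arity) (R : ℕ) (t : List ℕ) : Model arity :=
  { dom := M.dom, rel := fun S => if S = R then insert t (M.rel S) else M.rel S }

/-- Delete the tuple `t` from the relation `R`. -/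
def Model.deleteTuple (M : Model arity) (R : ℕ) (t : List ℕ) : Model arity :=
  { dom := M.dom, rel := fun S => if S = R then M.rel S \ {t} else M.rel S }

/-- Syntax of the computation logic 𝓛: first-order logic (over a relational
vocabulary, atoms built from variables) extended by the insertion operators
`I x φ` and `I_{R(x̄)} φ`, the deletion operators `D x φ` and `D_{R(x̄)} φ`,
the self-reference atoms `Cᵢ` and the naming constructs `Cᵢ φ`. -/
inductive LFormula where
  | rel (R : ℕ) (xs : List ℕ)
  | eq (x y : ℕ)
  | not (φ : LFormula)
  | and (φ ψ : LFormula)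
  | ex (x : ℕ) (φ : LFormula)
  | insPt (x : ℕ) (φ : LFormula)
  | insRel (R : ℕ) (xs : List ℕ) (φ : LFormula)
  | delPt (x : ℕ) (φ : LFormula)
  | delRel (R : ℕ) (xs : List ℕ) (φ : LFormula)
  | cAtom (i : ℕ)
  | cName (i : ℕ) (φ : LFormula)
deriving DecidableEq

/-- The subformula relation. -/
inductive Subf : LFormula → LFormula → Prop
  | refl (φ) : Subf φ φ
  | not : Subf χ φ → Subf χ (.not φ)
  | andL : Subf χ φ → Subf χ (.and φ ψ)
  | andR : Subf χ ψ → Subf χ (.and φ ψ)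
  | ex : Subf χ φ → Subf χ (.ex x φ)
  | insPt : Subf χ φ → Subf χ (.insPt x φ)
  | insRel : Subf χ φ → Subf χ (.insRel R xs φ)
  | delPt : Subf χ φ → Subf χ (.delPt x φ)
  | delRel : Subf χ φ → Subf χ (.delRel R xs φ)
  | cName : Subf χ φ → Subf χ (.cName i φ)

/-- `Win arity φ₀ who v M g ψ`: in the semantic game whose original formula is `φ₀`,
the player `who` (`true` = Eloise, `false` = Abelard) has a winning strategy from
the position `(M, g, ψ)`, where Eloise is the current verifier iff `v = true`.
Being an inductive (least fixed point) definition, a winning strategy must force a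
win in finitely many moves; infinite plays are won by neither player, and at game
positions where the play ends with no winner no constructor applies. -/
inductive Win (arity : ℕ → ℕ) (φ₀ : LFormula) :
    Bool → Bool → Model arity → Assign → LFormula → Prop where
  /-- A true atom is won by the current verifier. -/
  | relTrue {v : Bool} {M : Model arity} {g : Assign} {R xs as} :
      List.Forall₂ (fun x a => g x = some a) xs as → as ∈ M.rel R →
      Win arity φ₀ v v M g (.rel R xs)
  /-- A false atom is won by the current falsifier. -/
  | relFalse {v : Bool} {M : Model arity} {g : Assign} {R xs as} :
      List.Forall₂ (fun x a => g x = some a) xs as → as ∉ M.rel R →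
      Win arity φ₀ (!v) v M g (.rel R xs)
  | eqTrue {v : Bool} {M : Model arity} {g : Assign} {x y a b} :
      g x = some a → g y = some b → a = b →
      Win arity φ₀ v v M g (.eq x y)
  | eqFalse {v : Bool} {M : Model arity} {g : Assign} {x y a b} :
      g x = some a → g y = some b → a ≠ b →
      Win arity φ₀ (!v) v M g (.eq x y)
  /-- Negation swaps the roles of the players. -/
  | not {who v M g φ} :
      Win arity φ₀ who (!v) M g φ → Win arity φ₀ who v M g (.not φ)
  /-- At a conjunction the falsifier chooses; the verifier must win both conjuncts. -/
  | andVer {who v M g φ ψ} : who = v →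
      Win arity φ₀ who v M g φ → Win arity φ₀ who v M g ψ →
      Win arity φ₀ who v M g (.and φ ψ)
  | andFalL {who v M g φ ψ} : who = !v →
      Win arity φ₀ who v M g φ → Win arity φ₀ who v M g (.and φ ψ)
  | andFalR {who v M g φ ψ} : who = !v →
      Win arity φ₀ who v M g ψ → Win arity φ₀ who v M g (.and φ ψ)
  /-- At `∃x` the verifier chooses an element of the domain. -/
  | exVer {who v M g x φ a} : who = v → a ∈ M.dom →
      Win arity φ₀ who v M (g.update x a) φ → Win arity φ₀ who v M g (.ex x φ)
  | exFal {who v M g x φ} : who = !v →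
      (∀ a ∈ M.dom, Win arity φ₀ who v M (g.update x a) φ) →
      Win arity φ₀ who v M g (.ex x φ)
  /-- `I x φ`: a fresh isolated point is inserted and named `x`. -/
  | insPt {who v M g x φ} :
      Win arity φ₀ who v (M.addPt M.fresh) (g.update x M.fresh) φ →
      Win arity φ₀ who v M g (.insPt x φ)
  /-- `I_{R(x̄)} φ`: the verifier chooses a tuple of elements of the model and it is
  inserted into `R` (with an empty domain no tuple of positive length can be chosen,
  so the verifier is stuck and the falsifier wins, by vacuity of `insRelFal`). -/
  | insRelVer {who v M g R xs φ as} : who = v →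
      (∀ a ∈ as, a ∈ M.dom) → as.length = xs.length →
      Win arity φ₀ who v (M.addTuple R as) (g.updates xs as) φ →
      Win arity φ₀ who v M g (.insRel R xs φ)
  | insRelFal {who v M g R xs φ} : who = !v →
      (∀ as, (∀ a ∈ as, a ∈ M.dom) → as.length = xs.length →
        Win arity φ₀ who v (M.addTuple R as) (g.updates xs as) φ) →
      Win arity φ₀ who v M g (.insRel R xs φ)
  /-- `D x φ`: the point `g x` is deleted from the domain. -/
  | delPt {who v M g x φ u} : g x = some u →
      Win arity φ₀ who v (M.deletePt u) (g.delVal u) φ →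
      Win arity φ₀ who v M g (.delPt x φ)
  /-- If `x` is unassigned, the verifier loses the play. -/
  | delPtStuck {who v M g x φ} : g x = none → who = !v →
      Win arity φ₀ who v M g (.delPt x φ)
  /-- `D_{R(x̄)} φ`: the verifier chooses a tuple, which is removed from `R`. -/
  | delRelVer {who v M g R xs φ as} : who = v →
      (∀ x ∈ xs, (g x).isSome) →
      (∀ a ∈ as, a ∈ M.dom) → as.length = xs.length →
      Win arity φ₀ who v (M.deleteTuple R as) (g.updates xs as) φ →
      Win arity φ₀ who v M g (.delRel R xs φ)
  | delRelFal {who v M g R xs φ} : who = !v →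
      (∀ x ∈ xs, (g x).isSome) →
      (∀ as, (∀ a ∈ as, a ∈ M.dom) → as.length = xs.length →
        Win arity φ₀ who v (M.deleteTuple R as) (g.updates xs as) φ) →
      Win arity φ₀ who v M g (.delRel R xs φ)
  /-- If some `xᵢ` is unassigned, the verifier loses the play. -/
  | delRelStuck {who v M g R xs φ} : (∃ x ∈ xs, g x = none) → who = !v →
      Win arity φ₀ who v M g (.delRel R xs φ)
  /-- At `Cᵢ ψ` the game simply moves to `ψ`. -/
  | cName {who v M g i φ} :
      Win arity φ₀ who v M g φ → Win arity φ₀ who v M g (.cName i φ)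
  /-- At the atom `Cᵢ` the game jumps back to a subformula `Cᵢ ψ` of the original
  formula `φ₀`; if there are several, the verifier chooses; if there are none, the
  play ends with no winner (hence no constructor for that case). -/
  | cAtomVer {who v M g i ψ} : who = v → Subf (.cName i ψ) φ₀ →
      Win arity φ₀ who v M g (.cName i ψ) → Win arity φ₀ who v M g (.cAtom i)
  | cAtomFal {who v M g i} : who = !v → (∃ ψ, Subf (.cName i ψ) φ₀) →
      (∀ ψ, Subf (.cName i ψ) φ₀ → Win arity φ₀ who v M g (.cName i ψ)) →
      Win arity φ₀ who v M g (.cAtom i)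

/-- `𝔐 ⊨⁺ φ`: Eloise (the initial verifier) has a winning strategy in the
semantic game starting at `(𝔐, ∅, φ)`. -/
def SatPos (M : Model arity) (φ : LFormula) : Prop :=
  Win arity φ true true M Assign.empty φ

/-- `𝔐 ⊨⁻ φ`: Abelard (the initial falsifier) has a winning strategy in the
semantic game starting at `(𝔐, ∅, φ)`. -/
def SatNeg (M : Model arity) (φ : LFormula) : Prop :=
  Win arity φ false true M Assign.empty φ



/-- A position of the semantic game: the current model, assignment, formula, and a
flag recording whether Eloise is the current verifier. -/
structure Pos (arity : ℕ → ℕ) where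
  model : Model arity
  assign : Assign
  form : LFormula
  ver : Bool

/-- The one-move transition relation of the semantic game for 𝓛 whose original
formula is `φ₀` (moves of either player are collected together). Positions at
first-order atoms (including ones with unassigned variables), at stuck deletion
positions, and at atoms `Cᵢ` with no named subformula `Cᵢ ψ` of `φ₀` have no
successors: there the play ends. A play is infinite iff it never reaches a
position without successors. -/
inductive Step (arity : ℕ → ℕ) (φ₀ : LFormula) : Pos arity → Pos arity → Prop where
  | not {M g φ v} : Step arity φ₀ ⟨M, g, .not φ, v⟩ ⟨M, g, φ, !v⟩
  | andL {M g φ ψ v} : Step arity φ₀ ⟨M, g, .and φ ψ, v⟩ ⟨M, g, φ, v⟩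
  | andR {M g φ ψ v} : Step arity φ₀ ⟨M, g, .and φ ψ, v⟩ ⟨M, g, ψ, v⟩
  | ex {M : Model arity} {g x φ v a} : a ∈ M.dom →
      Step arity φ₀ ⟨M, g, .ex x φ, v⟩ ⟨M, g.update x a, φ, v⟩
  | insPt {M : Model arity} {g x φ v} :
      Step arity φ₀ ⟨M, g, .insPt x φ, v⟩ ⟨M.addPt M.fresh, g.update x M.fresh, φ, v⟩
  | insRel {M : Model arity} {g R xs φ v as} :
      (∀ a ∈ as, a ∈ M.dom) → as.length = xs.length →
      Step arity φ₀ ⟨M, g, .insRel R xs φ, v⟩ ⟨M.addTuple R as, g.updates xs as, φ, v⟩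
  | delPt {M : Model arity} {g : Assign} {x φ v u} : g x = some u →
      Step arity φ₀ ⟨M, g, .delPt x φ, v⟩ ⟨M.deletePt u, g.delVal u, φ, v⟩
  | delRel {M : Model arity} {g : Assign} {R xs φ v as} :
      (∀ x ∈ xs, (g x).isSome) → (∀ a ∈ as, a ∈ M.dom) → as.length = xs.length →
      Step arity φ₀ ⟨M, g, .delRel R xs φ, v⟩ ⟨M.deleteTuple R as, g.updates xs as, φ, v⟩
  | cName {M g i φ v} : Step arity φ₀ ⟨M, g, .cName i φ, v⟩ ⟨M, g, φ, v⟩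
  | cAtom {M g i ψ v} : Subf (.cName i ψ) φ₀ →
      Step arity φ₀ ⟨M, g, .cAtom i, v⟩ ⟨M, g, .cName i ψ, v⟩

/-- The truth-teller formula `C₀ C₀`. -/
def truthTeller : LFormula := .cName 0 (.cAtom 0)

/-- The liar-type formula `C₀ ¬C₀`. -/
def liar : LFormula := .cName 0 (.not (.cAtom 0))

end CompLogic

open CompLogic

lemma subf_tt {i : ℕ} {ψ : LFormula} (h : Subf (.cName i ψ) truthTeller) :
    i = 0 ∧ ψ = .cAtom 0 := by
  unfold truthTeller at h
  cases h with
  | refl => exact ⟨rfl, rfl⟩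
  | cName h' => cases h'

lemma subf_liar {i : ℕ} {ψ : LFormula} (h : Subf (.cName i ψ) liar) :
    i = 0 ∧ ψ = .not (.cAtom 0) := by
  unfold liar at h
  cases h with
  | refl => exact ⟨rfl, rfl⟩
  | cName h' => cases h' with
    | not h'' => cases h''

lemma noWin_tt {arity : ℕ → ℕ} {who v : Bool} {M : Model arity} {g : Assign}
    {φ : LFormula} (h : Win arity truthTeller who v M g φ)
    (hφ : φ = truthTeller ∨ φ = .cAtom 0) : False := by
  revert hφ
  induction h with
  | cName h ih =>
    intro hφ
    rcases hφ with h1 | h1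
    · unfold truthTeller at h1
      injection h1 with h2 h3
      exact ih (Or.inr h3)
    · cases h1
  | cAtomVer hw hs h ih =>
    intro hφ
    obtain ⟨hi, hψ⟩ := subf_tt hs
    exact ih (Or.inl (by rw [hi, hψ]; rfl))
  | cAtomFal hw hex hall ih =>
    intro hφ
    obtain ⟨ψ, hs⟩ := hex
    obtain ⟨hi, hψ⟩ := subf_tt hs
    exact ih ψ hs (Or.inl (by rw [hi, hψ]; rfl))
  | _ =>
    intro hφ
    rcases hφ with h1 | h1 <;> cases h1

lemma noWin_liar {arity : ℕ → ℕ} {who v : Bool} {M : Model arity} {g : Assign}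
    {φ : LFormula} (h : Win arity liar who v M g φ)
    (hφ : φ = liar ∨ φ = .not (.cAtom 0) ∨ φ = .cAtom 0) : False := by
  revert hφ
  induction h with
  | cName h ih =>
    intro hφ
    rcases hφ with h1 | h1 | h1
    · unfold liar at h1
      injection h1 with h2 h3
      exact ih (Or.inr (Or.inl h3))
    · cases h1
    · cases h1
  | not h ih =>
    intro hφ
    rcases hφ with h1 | h1 | h1
    · cases h1
    · injection h1 with h2
      exact ih (Or.inr (Or.inr h2))
    · cases h1
  | cAtomVer hw hs h ih =>
    intro hφ
    obtain ⟨hi, hψ⟩ := subf_liar hs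
    exact ih (Or.inl (by rw [hi, hψ]; rfl))
  | cAtomFal hw hex hall ih =>
    intro hφ
    obtain ⟨ψ, hs⟩ := hex
    obtain ⟨hi, hψ⟩ := subf_liar hs
    exact ih ψ hs (Or.inl (by rw [hi, hψ]; rfl))
  | _ =>
    intro hφ
    rcases hφ with h1 | h1 | h1 <;> cases h1

/-- Every play of the semantic game for the truth-teller formula
`C₀ C₀` is infinite (every position reachable from the initial position has a
successor, so no play ever ends); consequently, for every model `𝔐` and assignment
`g`, neither `𝔐,g ⊨⁺ C₀ C₀` nor `𝔐,g ⊨⁻ C₀ C₀`, i.e. neither Eloise nor Abelard has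
a winning strategy in `G(𝔐, g, C₀ C₀)`. The same holds for the liar-type formula
`C₀ ¬C₀`. -/
theorem truthTeller_and_liar_indeterminate (arity : ℕ → ℕ) (M : Model arity)
    (g : Assign) :
    ((∀ p : Pos arity,
        Relation.ReflTransGen (Step arity truthTeller) ⟨M, g, truthTeller, true⟩ p →
        ∃ q, Step arity truthTeller p q) ∧
      ¬ Win arity truthTeller true true M g truthTeller ∧
      ¬ Win arity truthTeller false true M g truthTeller) ∧
    ((∀ p : Pos arity,
        Relation.ReflTransGen (Step arity liar) ⟨M, g, liar, true⟩ p →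
        ∃ q, Step arity liar p q) ∧
      ¬ Win arity liar true true M g liar ∧
      ¬ Win arity liar false true M g liar) := by
  constructor
  · refine ⟨?_, fun h => noWin_tt h (Or.inl rfl), fun h => noWin_tt h (Or.inl rfl)⟩
    intro p hp
    have inv : p.form = truthTeller ∨ p.form = .cAtom 0 := by
      induction hp with
      | refl => exact Or.inl rfl
      | tail hr hs ih =>
        cases hs with
        | cName =>
          rcases ih with h1 | h1
          · unfold truthTeller at h1
            injection h1 with h2 h3
            exact Or.inr h3
          · cases h1
        | cAtom hsub =>
          obtain ⟨hi, hψ⟩ := subf_tt hsub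
          exact Or.inl (by simp only [hi, hψ]; rfl)
        | _ => rcases ih with h1 | h1 <;> cases h1
    obtain ⟨Mp, gp, fp, vp⟩ := p
    rcases inv with h1 | h1 <;> simp only at h1 <;> subst h1
    · exact ⟨_, Step.cName⟩
    · exact ⟨_, Step.cAtom (ψ := .cAtom 0) (Subf.refl _)⟩
  · refine ⟨?_, fun h => noWin_liar h (Or.inl rfl), fun h => noWin_liar h (Or.inl rfl)⟩
    intro p hp
    have inv : p.form = liar ∨ p.form = .not (.cAtom 0) ∨ p.form = .cAtom 0 := by
      induction hp with
      | refl => exact Or.inl rfl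
      | tail hr hs ih =>
        cases hs with
        | cName =>
          rcases ih with h1 | h1 | h1
          · unfold liar at h1
            injection h1 with h2 h3
            exact Or.inr (Or.inl h3)
          · cases h1
          · cases h1
        | not =>
          rcases ih with h1 | h1 | h1
          · cases h1
          · injection h1 with h2
            exact Or.inr (Or.inr h2)
          · cases h1
        | cAtom hsub =>
          obtain ⟨hi, hψ⟩ := subf_liar hsub
          exact Or.inl (by simp only [hi, hψ]; rfl)
        | _ => rcases ih with h1 | h1 | h1 <;> cases h1
    obtain ⟨Mp, gp, fp, vp⟩ := p
    rcases inv with h1 | h1 | h1 <;> simp only at h1 <;> subst h1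
    · exact ⟨_, Step.cName⟩
    · exact ⟨_, Step.not⟩
    · exact ⟨_, Step.cAtom (ψ := .not (.cAtom 0)) (Subf.refl _)⟩
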